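/- Ron Graham's sequence g is a bijection from the positive integers onto the set of positive integers that are not prime. -/

import Mathlib

/-!
If two square-product sequences share an endpoint, their symmetric difference is again a
square-product sequence (the common terms contribute a square). Comparing the sequence realising
`g n` with any other sequence ending at `g n` therefore shows that `n` is the largest least term
of a square-product sequence with greatest term `g n`; this makes `g` injective and identifies its
inverse. The image of `g` is the set of greatest terms of square-product sequences: a prime `p` is
never one, since it divides the product exactly once, while a composite `k = a * b` with
`1 < a < b` ends `{a, b, k}`, and a square ends `{k}`.
-/

/-- `Corr n k` says there is a square-product sequence (a nonempty finite set of
positive integers whose product is a perfect square) with least term `n` and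
greatest term `k`. -/
def Corr (n k : ℕ) : Prop :=
  ∃ S : Finset ℕ, (∀ a ∈ S, 0 < a) ∧ IsSquare (∏ a ∈ S, a) ∧
    n ∈ S ∧ k ∈ S ∧ ∀ a ∈ S, n ≤ a ∧ a ≤ k

/-- Ron Graham's sequence: the least `k` such that there is a square-product
sequence with least term `n` and greatest term `k`. -/
noncomputable def g (n : ℕ) : ℕ := sInf {k | Corr n k}

open scoped symmDiff

def IsSquareProduct (S : Finset ℕ) : Prop :=
  (∀ a ∈ S, 0 < a) ∧ IsSquare (∏ a ∈ S, a)

theorem Finset.prod_mul_prod_eq_prod_symmDiff_mul_sq {ι M : Type*} [CommMonoid M]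
    [DecidableEq ι] (s t : Finset ι) (f : ι → M) :
    (∏ i ∈ s, f i) * ∏ i ∈ t, f i = (∏ i ∈ s ∆ t, f i) * (∏ i ∈ s ∩ t, f i) ^ 2 := by
  rw [← prod_union_inter, symmDiff_eq_sup_sdiff_inf, sup_eq_union, inf_eq_inter,
    ← prod_sdiff inter_subset_union, sq, mul_assoc]

lemma Nat.isSquare_of_isSquare_mul_sq {x c : ℕ} (hc : c ≠ 0) (h : IsSquare (x * c ^ 2)) :
    IsSquare x := by
  rw [← Rat.isSquare_natCast_iff] at h ⊢
  simpa [hc] using h.div (IsSquare.sq (c : ℚ))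

lemma Nat.Prime.not_isSquare_mul {p r : ℕ} (hp : p.Prime) (hr : ¬ p ∣ r) :
    ¬ IsSquare (p * r) := by
  rintro ⟨x, hx⟩
  obtain ⟨y, rfl⟩ : p ∣ x := (hp.dvd_mul.1 (hx ▸ dvd_mul_right p r)).elim id id
  exact hr ⟨y * y, Nat.eq_of_mul_eq_mul_left hp.pos (by rw [hx]; ring)⟩

namespace IsSquareProduct

variable {S T : Finset ℕ}

lemma symmDiff (hS : IsSquareProduct S) (hT : IsSquareProduct T) : IsSquareProduct (S ∆ T) := by
  refine ⟨fun a ha => ?_, ?_⟩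
  · rcases Finset.mem_union.1 (Finset.symmDiff_subset_union ha) with h | h
    exacts [hS.1 a h, hT.1 a h]
  · have hinter : ∏ a ∈ S ∩ T, a ≠ 0 :=
      (Finset.prod_pos fun a ha => hS.1 a (Finset.mem_inter.1 ha).1).ne'
    refine Nat.isSquare_of_isSquare_mul_sq hinter ?_
    rw [← Finset.prod_mul_prod_eq_prod_symmDiff_mul_sq]
    exact hS.2.mul hT.2

lemma exists_corr_of_forall_le (hS : IsSquareProduct S) {n : ℕ} (hn : n ∈ S)
    (hle : ∀ a ∈ S, n ≤ a) : ∃ k ∈ S, Corr n k :=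
  ⟨S.max' ⟨n, hn⟩, S.max'_mem _, S, hS.1, hS.2, hn, S.max'_mem _,
    fun a ha => ⟨hle a ha, S.le_max' a ha⟩⟩

lemma exists_corr_of_forall_ge (hS : IsSquareProduct S) {k : ℕ} (hk : k ∈ S)
    (hge : ∀ a ∈ S, a ≤ k) : ∃ n ∈ S, Corr n k :=
  ⟨S.min' ⟨k, hk⟩, S.min'_mem _, S, hS.1, hS.2, S.min'_mem _, hk,
    fun a ha => ⟨S.min'_le a ha, hge a ha⟩⟩

end IsSquareProduct

lemma corr_iff {n k : ℕ} :
    Corr n k ↔ ∃ S, IsSquareProduct S ∧ n ∈ S ∧ k ∈ S ∧ ∀ a ∈ S, n ≤ a ∧ a ≤ k := by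
  simp only [Corr, IsSquareProduct, and_assoc]

namespace Corr

variable {n m k k' : ℕ}

lemma pos (h : Corr n k) : 0 < n := by
  obtain ⟨S, hS, hn, -⟩ := corr_iff.1 h
  exact hS.1 n hn

lemma le (h : Corr n k) : n ≤ k := by
  obtain ⟨S, -, -, hk, hb⟩ := corr_iff.1 h
  exact (hb k hk).1

lemma not_prime (h : Corr n k) : ¬ k.Prime := by
  intro hk
  obtain ⟨S, hS, -, hkS, hb⟩ := corr_iff.1 h
  have hndvd : ¬ k ∣ ∏ a ∈ S.erase k, a := by
    rw [hk.prime.dvd_finsetProd_iff]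
    rintro ⟨a, ha, hka⟩
    obtain ⟨hak, haS⟩ := Finset.mem_erase.1 ha
    exact hak ((Nat.le_of_dvd (hS.1 a haS) hka).antisymm' (hb a haS).2)
  exact hk.not_isSquare_mul hndvd (Finset.mul_prod_erase S id hkS ▸ hS.2)

lemma exists_lt_of_lt_left (hn : Corr n k) (hm : Corr m k) (hlt : n < m) :
    ∃ k' < k, Corr n k' := by
  obtain ⟨S, hS, hnS, hkS, hSb⟩ := corr_iff.1 hn
  obtain ⟨T, hT, -, hkT, hTb⟩ := corr_iff.1 hm
  have hb : ∀ a ∈ S ∆ T, n ≤ a ∧ a < k := fun a ha => by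
    rcases Finset.mem_symmDiff.1 ha with ⟨haS, haT⟩ | ⟨haT, haS⟩
    · exact ⟨(hSb a haS).1, (hSb a haS).2.lt_of_ne (by rintro rfl; exact haT hkT)⟩
    · exact ⟨by have := (hTb a haT).1; omega, (hTb a haT).2.lt_of_ne (by rintro rfl; exact haS hkS)⟩
  have hnD : n ∈ S ∆ T :=
    Finset.mem_symmDiff.2 (.inl ⟨hnS, fun hnT => by have := (hTb n hnT).1; omega⟩)
  obtain ⟨k', hk'D, hcorr⟩ := (hS.symmDiff hT).exists_corr_of_forall_le hnD fun a ha => (hb a ha).1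
  exact ⟨k', (hb k' hk'D).2, hcorr⟩

lemma exists_gt_of_lt_right (hk : Corr n k) (hk' : Corr n k') (hlt : k < k') :
    ∃ m > n, Corr m k' := by
  obtain ⟨S, hS, hnS, -, hSb⟩ := corr_iff.1 hk
  obtain ⟨T, hT, hnT, hkT, hTb⟩ := corr_iff.1 hk'
  have hb : ∀ a ∈ S ∆ T, n < a ∧ a ≤ k' := fun a ha => by
    rcases Finset.mem_symmDiff.1 ha with ⟨haS, haT⟩ | ⟨haT, haS⟩
    · exact ⟨(hSb a haS).1.lt_of_ne (by rintro rfl; exact haT hnT), by have := (hSb a haS).2; omega⟩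
    · exact ⟨(hTb a haT).1.lt_of_ne (by rintro rfl; exact haS hnS), (hTb a haT).2⟩
  have hkD : k' ∈ S ∆ T :=
    Finset.mem_symmDiff.2 (.inr ⟨hkT, fun hkS => by have := (hSb k' hkS).2; omega⟩)
  obtain ⟨m, hmD, hcorr⟩ := (hS.symmDiff hT).exists_corr_of_forall_ge hkD fun a ha => (hb a ha).2
  exact ⟨m, (hb m hmD).1, hcorr⟩

end Corr

lemma exists_corr_iff {k : ℕ} : (∃ n, Corr n k) ↔ 0 < k ∧ ¬ k.Prime := by
  refine ⟨fun ⟨n, h⟩ => ⟨h.pos.trans_le h.le, h.not_prime⟩, fun ⟨hk, hkp⟩ => ?_⟩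
  by_cases hsq : IsSquare k
  · exact ⟨k, {k}, by simpa using hk, by simpa using hsq, by simp, by simp, by simp⟩
  have hk1 : k ≠ 1 := by rintro rfl; exact hsq IsSquare.one
  set a := k.minFac
  have ha : 2 ≤ a := (Nat.minFac_prime hk1).two_le
  obtain ⟨b, hab⟩ : a ∣ k := k.minFac_dvd
  -- `a ^ 2 ≤ k = a * b` gives `a ≤ b`, and `a ≠ b` as `k` is not a square
  have hlt : a < b := by
    have hle : a * a ≤ a * b := hab ▸ sq a ▸ Nat.minFac_sq_le_self hk hkp
    exact (Nat.le_of_mul_le_mul_left hle (by omega)).lt_of_ne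
      (by rintro rfl; exact hsq ⟨a, hab⟩)
  have hbk : b < k := by nlinarith
  refine ⟨a, {a, b, k}, by simp; omega, ?_, by simp, by simp, by simp; omega⟩
  rw [Finset.prod_insert (by simp; omega), Finset.prod_pair (by omega)]
  exact ⟨k, by rw [← mul_assoc, ← hab]⟩

lemma corr_self_four_mul {n : ℕ} (hn : 0 < n) : Corr n (4 * n) := by
  refine corr_iff.2 ⟨{n, 4 * n}, ⟨by simp [hn], ?_⟩, by simp, by simp, by simp; omega⟩
  rw [Finset.prod_pair (by omega)]
  exact ⟨2 * n, by ring⟩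

lemma corr_g {n : ℕ} (hn : 0 < n) : Corr n (g n) :=
  Nat.sInf_mem (s := {k | Corr n k}) ⟨4 * n, corr_self_four_mul hn⟩

lemma g_le {n k : ℕ} (h : Corr n k) : g n ≤ k := Nat.sInf_le h

lemma g_eq_iff_isGreatest {n k : ℕ} (hn : 0 < n) :
    g n = k ↔ IsGreatest {m | Corr m k} n := by
  constructor
  · rintro rfl
    refine ⟨corr_g hn, fun m hm => not_lt.1 fun hlt => ?_⟩
    obtain ⟨k', hk', hcorr⟩ := (corr_g hn).exists_lt_of_lt_left hm hlt
    exact (g_le hcorr).not_gt hk'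
  · rintro ⟨hnk, hmax⟩
    refine (g_le hnk).antisymm (not_lt.1 fun hlt => ?_)
    obtain ⟨m, hm, hcorr⟩ := (corr_g hn).exists_gt_of_lt_right hnk hlt
    exact (hmax hcorr).not_gt hm

theorem g_bijOn : Set.BijOn g {n : ℕ | 0 < n} {k : ℕ | 0 < k ∧ ¬ k.Prime} := by
  refine ⟨fun n hn => exists_corr_iff.1 ⟨n, corr_g hn⟩, fun n hn m hm h => ?_, fun k hk => ?_⟩
  · exact ((g_eq_iff_isGreatest hn).1 rfl).unique ((g_eq_iff_isGreatest hm).1 h.symm)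
  · have hne : {m | Corr m k}.Nonempty := exists_corr_iff.2 hk
    have hbdd : BddAbove {m | Corr m k} := ⟨k, fun m => Corr.le⟩
    have hgreatest : IsGreatest {m | Corr m k} (sSup {m | Corr m k}) :=
      ⟨Nat.sSup_mem hne hbdd, fun _ => le_csSup hbdd⟩
    exact ⟨_, hgreatest.1.pos, (g_eq_iff_isGreatest hgreatest.1.pos).2 hgreatest⟩
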